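/- arXiv:1910.01472 — 9 statements merged into one kernel-verified Lean document; each statement's English description precedes it below -/
import Mathlib

section
/- Every finite-dimensional soluble ω-Lie algebra L over ℂ of dimension n has a proper ideal of dimension n−1; in particular, L is normal of degree 1. -/
/-- An ω-Lie algebra over ℂ: a vector space with a skew-symmetric bilinear
bracket and a bilinear form ω satisfying the ω-Jacobi identity. -/
structure OmegaLie (L : Type) [AddCommGroup L] [Module ℂ L] where
  bracket : L →ₗ[ℂ] L →ₗ[ℂ] L
  omega : L →ₗ[ℂ] L →ₗ[ℂ] ℂ
  skew : ∀ x y : L, bracket x y = - bracket y x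
  jacobi : ∀ x y z : L,
    bracket (bracket x y) z + bracket (bracket y z) x + bracket (bracket z x) y
      = omega x y • z + omega y z • x + omega z x • y

namespace OmegaLie

variable {L : Type} [AddCommGroup L] [Module ℂ L]

/-- An ideal of an ω-Lie algebra. -/
def IsIdeal (A : OmegaLie L) (I : Submodule ℂ L) : Prop :=
  ∀ x ∈ I, ∀ y : L, A.bracket x y ∈ I

/-- The derived series starting from a subspace `I`. -/
def derivedFrom (A : OmegaLie L) (I : Submodule ℂ L) : ℕ → Submodule ℂ L
  | 0 => I
  | k + 1 => Submodule.span ℂ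
      {w : L | ∃ a ∈ derivedFrom A I k, ∃ b ∈ derivedFrom A I k, w = A.bracket a b}

/-- Solubility: the derived series terminates at 0. -/
def IsSoluble (A : OmegaLie L) : Prop := ∃ k, A.derivedFrom ⊤ k = ⊥

/-- A module over an ω-Lie algebra. -/
structure Mod (A : OmegaLie L) (V : Type) [AddCommGroup V] [Module ℂ V] where
  ρ : L →ₗ[ℂ] V →ₗ[ℂ] V
  compat : ∀ (x y : L) (v : V),
    ρ (A.bracket x y) v = ρ x (ρ y v) - ρ y (ρ x v) + A.omega x y • v

/-- An irreducible module: nonzero and with no nonzero proper submodules. -/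
def Mod.IsIrreducible {A : OmegaLie L} {V : Type} [AddCommGroup V] [Module ℂ V]
    (M : A.Mod V) : Prop :=
  (∃ v : V, v ≠ 0) ∧
    ∀ W : Submodule ℂ V, (∀ x : L, ∀ v ∈ W, M.ρ x v ∈ W) → W = ⊥ ∨ W = ⊤

end OmegaLie

/-! Solubility forces `[L, L] ≠ L` (otherwise the derived series is constantly `L ≠ 0`), and every
subspace containing `[L, L]` is an ideal; so any hyperplane containing `[L, L]` is an ideal of
codimension one. -/

theorem Submodule.exists_le_finrank_add_one_eq {K V : Type*} [Field K] [AddCommGroup V]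
    [Module K V] [FiniteDimensional K V] {W : Submodule K V} (hW : W ≠ ⊤) :
    ∃ H : Submodule K V, W ≤ H ∧ Module.finrank K H + 1 = Module.finrank K V := by
  obtain ⟨f, hf, hWf⟩ := W.exists_dual_map_eq_bot_of_lt_top hW.lt_top inferInstance
  exact ⟨LinearMap.ker f, LinearMap.le_ker_iff_map.mpr hWf,
    Module.Dual.finrank_ker_add_one_of_ne_zero hf⟩

namespace OmegaLie

variable {L : Type} [AddCommGroup L] [Module ℂ L] (A : OmegaLie L)

theorem bracket_mem_derivedFrom_one (x y : L) : A.bracket x y ∈ A.derivedFrom ⊤ 1 :=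
  Submodule.subset_span ⟨x, Submodule.mem_top, y, Submodule.mem_top, rfl⟩

theorem isIdeal_of_derivedFrom_one_le {I : Submodule ℂ L} (hI : A.derivedFrom ⊤ 1 ≤ I) :
    A.IsIdeal I :=
  fun x _ y ↦ hI (A.bracket_mem_derivedFrom_one x y)

theorem derivedFrom_top_eq_top (h : A.derivedFrom ⊤ 1 = ⊤) (k : ℕ) : A.derivedFrom ⊤ k = ⊤ := by
  induction k with
  | zero => rfl
  | succ k ih =>
    rw [derivedFrom, ih]
    exact h

variable {A} in
theorem IsSoluble.derivedFrom_one_ne_top [Nontrivial L] (hA : A.IsSoluble) :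
    A.derivedFrom ⊤ 1 ≠ ⊤ := by
  intro h
  obtain ⟨k, hk⟩ := hA
  rw [A.derivedFrom_top_eq_top h k] at hk
  exact top_ne_bot hk

end OmegaLie

/-- Every finite-dimensional soluble ω-Lie algebra `L` over ℂ of positive
dimension `n` has a proper ideal of dimension `n − 1`; in particular (when `n ≥ 2`) it
has a nonzero proper ideal of codimension 1, i.e. `L` is normal of degree 1. -/
theorem soluble_omegaLie_normal_degree_one
    {L : Type} [AddCommGroup L] [Module ℂ L] [FiniteDimensional ℂ L]
    (A : OmegaLie L) (hsol : A.IsSoluble) (hdim : 0 < Module.finrank ℂ L) :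
    ∃ I : Submodule ℂ L, A.IsIdeal I ∧ I ≠ ⊤ ∧
      Module.finrank ℂ I = Module.finrank ℂ L - 1 ∧
      (2 ≤ Module.finrank ℂ L → I ≠ ⊥) := by
  have : Nontrivial L := Module.nontrivial_of_finrank_pos hdim
  obtain ⟨I, hderived, hcodim⟩ :=
    Submodule.exists_le_finrank_add_one_eq hsol.derivedFrom_one_ne_top
  refine ⟨I, A.isIdeal_of_derivedFrom_one_le hderived, ?_, by omega, ?_⟩
  · rintro rfl
    rw [finrank_top] at hcodim
    omega
  · rintro h2 rfl
    rw [finrank_bot] at hcodim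
    omega
end

section
/- Let L be a multiplicative ω-Lie algebra with linear form λ (so ω(x,y) = λ([x,y])) and let V, W be L-modules. Then the tensor product V ⊗ W is an L-module with action x·(v⊗w) := x·v ⊗ w + v ⊗ x·w − λ(x) v⊗w. -/
open TensorProduct in
/-- if `L` is a multiplicative ω-Lie algebra with linear form `λ`
(so `ω(x,y) = λ([x,y])`) and `V`, `W` are `L`-modules, then `V ⊗ W` is an `L`-module
with action `x·(v⊗w) = x·v ⊗ w + v ⊗ x·w − λ(x) v⊗w`. -/
theorem tensor_module_of_multiplicative
    {L : Type} [AddCommGroup L] [Module ℂ L] (A : OmegaLie L)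
    (lam : L →ₗ[ℂ] ℂ) (hmul : ∀ x y : L, A.omega x y = lam (A.bracket x y))
    {V W : Type} [AddCommGroup V] [Module ℂ V] [AddCommGroup W] [Module ℂ W]
    (MV : A.Mod V) (MW : A.Mod W) :
    ∃ M : A.Mod (V ⊗[ℂ] W), ∀ (x : L) (v : V) (w : W),
      M.ρ x (v ⊗ₜ[ℂ] w)
        = (MV.ρ x v) ⊗ₜ[ℂ] w + v ⊗ₜ[ℂ] (MW.ρ x w) - lam x • (v ⊗ₜ[ℂ] w) := by
  classical
  refine ⟨⟨{ toFun := fun x => (LinearMap.rTensor W (MV.ρ x) + LinearMap.lTensor V (MW.ρ x) - lam x • LinearMap.id), map_add' := fun x y => by simp [map_add, add_smul]; abel, map_smul' := fun c x => by simp [smul_smul]; module }, ?_⟩, ?_⟩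
  · intro x y t
    induction t using TensorProduct.induction_on with
    | zero => simp
    | tmul v w =>
        simp only [LinearMap.coe_mk, AddHom.coe_mk, LinearMap.sub_apply,
          LinearMap.add_apply, LinearMap.smul_apply, LinearMap.id_apply,
          LinearMap.rTensor_tmul, LinearMap.lTensor_tmul, map_sub, map_add,
          map_smul, MV.compat, MW.compat, hmul]
        simp only [tmul_add, tmul_sub, add_tmul, sub_tmul, smul_tmul',
          tmul_smul, smul_sub, smul_add, smul_smul]
        ring_nf
        abel
    | add a b ha hb =>
        simp only [map_add, ha, hb, smul_add]; abel
  · intro x v w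
    simp
end

section
/- Let L be an ω-Lie algebra and 𝔤 a Lie subalgebra of L with dim(𝔤) = dim(L) − 1 (so ω vanishes on 𝔤×𝔤). Then for any x ∈ L not in 𝔤, the restriction of ad_x to 𝔤 is a tailed derivation of 𝔤, with tail given by the linear function y ↦ ω(x,y). -/
/-- if `𝔤` is a Lie subalgebra of an ω-Lie algebra `L` of codimension 1
(on which ω vanishes), then for any `x ∈ L` not in `𝔤`, the restriction of `ad_x` to `𝔤`
is a tailed derivation of `𝔤` with tail `y ↦ ω(x,y)`:
`[x,[y,z]] = [[x,y],z] + [y,[x,z]] + ω(x,z) y − ω(x,y) z` for all `y, z ∈ 𝔤`. -/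
theorem ad_restriction_tailed_derivation
    {L : Type} [AddCommGroup L] [Module ℂ L] [FiniteDimensional ℂ L]
    (A : OmegaLie L) (g : Submodule ℂ L)
    (hsub : ∀ y ∈ g, ∀ z ∈ g, A.bracket y z ∈ g)
    (homega : ∀ y ∈ g, ∀ z ∈ g, A.omega y z = 0)
    (hcodim : Module.finrank ℂ g = Module.finrank ℂ L - 1)
    (x : L) (hx : x ∉ g) :
    ∀ y ∈ g, ∀ z ∈ g,
      A.bracket x (A.bracket y z)
        = A.bracket (A.bracket x y) z + A.bracket y (A.bracket x z)
            + A.omega x z • y - A.omega x y • z := by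
  -- ω is skew on pairs (z, x) with z ∈ g, x ∉ g
  have hωskew : ∀ z ∈ g, A.omega z x = - A.omega x z := by
    intro z hz
    by_cases hz0 : z = 0
    · simp [hz0]
    · -- bracket z z = 0
      have hzz : A.bracket z z = 0 := by
        have h2 : (2 : ℂ) • A.bracket z z = 0 := by
          rw [two_smul]
          nth_rewrite 1 [A.skew z z]
          abel
        rcases smul_eq_zero.mp h2 with h | h
        · exact absurd h two_ne_zero
        · exact h
      have hj := A.jacobi x z z
      rw [hzz] at hj
      simp only [map_zero, LinearMap.zero_apply, add_zero] at hj
      have hlhs : A.bracket (A.bracket x z) z + A.bracket (A.bracket z x) z = 0 := by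
        rw [A.skew z x]
        simp only [map_neg, LinearMap.neg_apply]
        abel
      rw [hlhs] at hj
      -- 0 = ω x z • z + ω z z • x + ω z x • z
      have hzzω : A.omega z z = 0 := by
        by_contra hne
        apply hx
        have hxg : A.omega z z • x = -(A.omega x z • z) - A.omega z x • z := by
          linear_combination (norm := module) -hj
        have : x = (A.omega z z)⁻¹ • (A.omega z z • x) := by
          rw [smul_smul, inv_mul_cancel₀ hne, one_smul]
        rw [this, hxg]
        exact Submodule.smul_mem _ _ (Submodule.sub_mem _
          (Submodule.neg_mem _ (Submodule.smul_mem _ _ hz)) (Submodule.smul_mem _ _ hz))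
      rw [hzzω, zero_smul, add_zero] at hj
      have hsum : (A.omega x z + A.omega z x) • z = 0 := by
        rw [add_smul, ← hj]
      rcases smul_eq_zero.mp hsum with h | h
      · linear_combination h
      · exact absurd h hz0
  intro y hy z hz
  have hj := A.jacobi x y z
  have hyz : A.omega y z = 0 := homega y hy z hz
  have hzx : A.omega z x = - A.omega x z := hωskew z hz
  have h1 : A.bracket (A.bracket y z) x = - A.bracket x (A.bracket y z) :=
    A.skew _ _
  have h2 : A.bracket (A.bracket z x) y = A.bracket y (A.bracket x z) := by
    rw [A.skew z x, A.skew y (A.bracket x z)]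
    simp
  rw [h1, h2, hyz, hzx] at hj
  simp only [zero_smul, add_zero, neg_smul] at hj
  linear_combination (norm := module) -hj
end

section
/- Let 𝔤 be a complex Lie algebra. There is a one-to-one correspondence between tailed derivations of 𝔤 and one-dimensional ω-extensions of 𝔤: given a tailed derivation D with tail d, the space 𝔤 ⊕ ℂx with bracket extended by [x,y] := D(y), [x,x] := 0 and skew form ω extended by ω(x,y) := d_y, ω(𝔤,𝔤) := 0 is an ω-Lie algebra containing 𝔤 as an ideal; conversely every one-dimensional ω-extension arises this way via ad_x restricted to 𝔤. -/
/-- A tailed derivation of a complex Lie algebra `𝔤`. -/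
structure TailedDer (g : Type) [LieRing g] [LieAlgebra ℂ g] where
  D : g →ₗ[ℂ] g
  d : g →ₗ[ℂ] ℂ
  tailed : ∀ y z : g, D ⁅y, z⁆ = ⁅D y, z⁆ + ⁅y, D z⁆ + d z • y - d y • z

/-- A one-dimensional ω-extension of a Lie algebra `𝔤`: an ω-Lie algebra structure
(with skew-symmetric ω) on `𝔤 ⊕ ℂx` (here realized as `g × ℂ`, with `x = (0,1)`)
extending the bracket of `𝔤`, in which `𝔤 = g × {0}` is an ideal and ω vanishes on
`𝔤 × 𝔤`. -/
structure OmegaExt (g : Type) [LieRing g] [LieAlgebra ℂ g] where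
  alg : OmegaLie (g × ℂ)
  omega_skew : ∀ u v : g × ℂ, alg.omega u v = - alg.omega v u
  bracket_eq : ∀ a b : g, alg.bracket (a, 0) (b, 0) = (⁅a, b⁆, 0)
  ideal : ∀ (a : g) (u : g × ℂ), (alg.bracket (a, 0) u).2 = 0
  omega_g : ∀ a b : g, alg.omega (a, 0) (b, 0) = 0


variable {g : Type} [LieRing g] [LieAlgebra ℂ g]

noncomputable def fwdBr (T : TailedDer g) : (g × ℂ) →ₗ[ℂ] (g × ℂ) →ₗ[ℂ] (g × ℂ) :=
  LinearMap.mk₂ ℂ (fun u v => (⁅u.1, v.1⁆ + u.2 • T.D v.1 - v.2 • T.D u.1, (0:ℂ)))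
    (by intro u u' v
        refine Prod.ext ?_ (by simp)
        simp only [Prod.fst_add, Prod.snd_add, add_lie, map_add, add_smul, smul_add]
        try module)
    (by intro c u v
        refine Prod.ext ?_ (by simp)
        simp only [Prod.smul_fst, Prod.smul_snd, smul_lie, map_smul, smul_eq_mul,
          Prod.smul_mk, smul_sub, smul_add, smul_smul, mul_comm]
        try module)
    (by intro u v v'
        refine Prod.ext ?_ (by simp)
        simp only [Prod.fst_add, Prod.snd_add, lie_add, map_add, add_smul, smul_add]
        try module)
    (by intro c u v
        refine Prod.ext ?_ (by simp)
        simp only [Prod.smul_fst, Prod.smul_snd, lie_smul, map_smul, smul_eq_mul,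
          Prod.smul_mk, smul_sub, smul_add, smul_smul, mul_comm]
        try module)

noncomputable def fwdOm (T : TailedDer g) : (g × ℂ) →ₗ[ℂ] (g × ℂ) →ₗ[ℂ] ℂ :=
  LinearMap.mk₂ ℂ (fun u v => u.2 * T.d v.1 - v.2 * T.d u.1)
    (by intro u u' v; simp; ring)
    (by intro c u v; simp; ring)
    (by intro u v v'; simp; ring)
    (by intro c u v; simp; ring)

lemma fwdBr_apply (T : TailedDer g) (u v : g × ℂ) :
    fwdBr T u v = (⁅u.1, v.1⁆ + u.2 • T.D v.1 - v.2 • T.D u.1, (0:ℂ)) := rfl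

lemma fwdOm_apply (T : TailedDer g) (u v : g × ℂ) :
    fwdOm T u v = u.2 * T.d v.1 - v.2 * T.d u.1 := rfl

noncomputable def fwd (T : TailedDer g) : OmegaExt g where
  alg :=
  { bracket := fwdBr T
    omega := fwdOm T
    skew := by
      intro u v
      simp only [fwdBr_apply, Prod.neg_mk, neg_zero]
      refine Prod.ext ?_ rfl
      simp only [← lie_skew u.1 v.1]
      abel
    jacobi := by
      intro x y z
      obtain ⟨a, s⟩ := x; obtain ⟨b, t⟩ := y; obtain ⟨c, r⟩ := z
      simp only [fwdBr_apply, fwdOm_apply]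
      refine Prod.ext ?_ ?_
      · simp only [Prod.fst_add, Prod.smul_fst, Prod.snd_add, Prod.smul_snd,
          add_lie, sub_lie, smul_lie, map_add, map_sub, map_smul, smul_sub, smul_add,
          smul_smul, smul_zero, mul_zero, zero_smul, zero_mul, mul_one, one_mul,
          sub_zero, zero_sub, add_zero, zero_add]
        have h := lie_jacobi a b c
        have h1 : ⁅⁅a,b⁆,c⁆ = -⁅c,⁅a,b⁆⁆ := (lie_skew _ _).symm
        have h2 : ⁅⁅b,c⁆,a⁆ = -⁅a,⁅b,c⁆⁆ := (lie_skew _ _).symm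
        have h3 : ⁅⁅c,a⁆,b⁆ = -⁅b,⁅c,a⁆⁆ := (lie_skew _ _).symm
        have s1 : ⁅T.D a, c⁆ = -⁅c, T.D a⁆ := (lie_skew _ _).symm
        have s2 : ⁅T.D b, a⁆ = -⁅a, T.D b⁆ := (lie_skew _ _).symm
        have s3 : ⁅T.D c, b⁆ = -⁅b, T.D c⁆ := (lie_skew _ _).symm
        have t1 := T.tailed a b
        have t2 := T.tailed b c
        have t3 := T.tailed c a
        linear_combination (norm := module) h1 + h2 + h3 - h + (-t) • s1 + (-r) • s2 + (-s) • s3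
          - r • t1 - s • t2 - t • t3
      · simp only [Prod.fst_add, Prod.smul_fst, Prod.snd_add, Prod.smul_snd,
          smul_eq_mul]
        ring }
  omega_skew := by intro u v; simp only [fwdOm_apply]; ring
  bracket_eq := by intro a b; simp [fwdBr_apply]
  ideal := by intro a u; simp [fwdBr_apply]
  omega_g := by intro a b; simp [fwdOm_apply]

lemma brx (E : OmegaExt g) (a : g) :
    E.alg.bracket ((0:g),(1:ℂ)) (a,0) = ((E.alg.bracket ((0:g),(1:ℂ)) (a,0)).1, 0) := by
  refine Prod.ext rfl ?_
  have h := congrArg Prod.snd (E.alg.skew ((0:g),(1:ℂ)) (a,0))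
  simp only [Prod.snd_neg, E.ideal a, neg_zero] at h
  simpa using h

lemma br_g_x (E : OmegaExt g) (a : g) :
    E.alg.bracket (a,0) ((0:g),(1:ℂ)) = -((E.alg.bracket ((0:g),(1:ℂ)) (a,0)).1, 0) := by
  conv_lhs => rw [E.alg.skew, brx]

lemma br_x_x (E : OmegaExt g) :
    E.alg.bracket ((0:g),(1:ℂ)) ((0:g),(1:ℂ)) = 0 := by
  have h := E.alg.skew ((0:g),(1:ℂ)) ((0:g),(1:ℂ))
  have h2 : (2:ℂ) • E.alg.bracket ((0:g),(1:ℂ)) ((0:g),(1:ℂ)) = 0 := by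
    rw [two_smul]; nth_rewrite 2 [h]; abel
  have := smul_eq_zero.mp h2
  simpa using this

lemma om_x_x (E : OmegaExt g) :
    E.alg.omega ((0:g),(1:ℂ)) ((0:g),(1:ℂ)) = 0 := by
  have h := E.omega_skew ((0:g),(1:ℂ)) ((0:g),(1:ℂ))
  linear_combination h/2

noncomputable def bwd (E : OmegaExt g) : TailedDer g where
  D := (LinearMap.fst ℂ g ℂ) ∘ₗ (E.alg.bracket ((0:g),(1:ℂ))) ∘ₗ (LinearMap.inl ℂ g ℂ)
  d := (E.alg.omega ((0:g),(1:ℂ))) ∘ₗ (LinearMap.inl ℂ g ℂ)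
  tailed := by
    intro a b
    simp only [LinearMap.comp_apply, LinearMap.fst_apply, LinearMap.inl_apply]
    have h := E.alg.jacobi ((0:g),(1:ℂ)) (a,0) (b,0)
    rw [brx E a, E.bracket_eq, E.bracket_eq, br_g_x E ⁅a,b⁆, br_g_x E b] at h
    rw [map_neg, LinearMap.neg_apply, E.bracket_eq] at h
    rw [E.omega_g a b, E.omega_skew (b,0) ((0:g),(1:ℂ))] at h
    have hfst := congrArg Prod.fst h
    simp only [Prod.fst_add, Prod.fst_neg, Prod.smul_fst, smul_zero, add_zero,
      zero_smul, neg_smul] at hfst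
    have sk : ⁅((E.alg.bracket ((0:g),(1:ℂ))) (b,0)).1, a⁆
        = -⁅a, ((E.alg.bracket ((0:g),(1:ℂ))) (b,0)).1⁆ := (lie_skew _ _).symm
    linear_combination (norm := module) -hfst - sk

lemma TailedDer.ext' {T S : TailedDer g} (h1 : T.D = S.D) (h2 : T.d = S.d) : T = S := by
  cases T; cases S; cases h1; cases h2; rfl

lemma OmegaLie.ext' {L : Type} [AddCommGroup L] [Module ℂ L] {A B : OmegaLie L}
    (h1 : A.bracket = B.bracket) (h2 : A.omega = B.omega) : A = B := by
  cases A; cases B; cases h1; cases h2; rfl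

lemma OmegaExt.ext' {A B : OmegaExt g} (h : A.alg = B.alg) : A = B := by
  cases A; cases B; cases h; rfl

lemma left_inv' (T : TailedDer g) : bwd (fwd T) = T := by
  refine TailedDer.ext' ?_ ?_
  · ext a
    show ((fwd T).alg.bracket ((0:g),(1:ℂ)) (a,0)).1 = T.D a
    show (fwdBr T ((0:g),(1:ℂ)) (a,0)).1 = T.D a
    simp [fwdBr_apply]
  · ext a
    show (fwd T).alg.omega ((0:g),(1:ℂ)) (a,0) = T.d a
    show fwdOm T ((0:g),(1:ℂ)) (a,0) = T.d a
    simp [fwdOm_apply]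

lemma decomp (u : g × ℂ) : u = (u.1, 0) + u.2 • ((0:g),(1:ℂ)) := by
  refine Prod.ext ?_ ?_ <;> simp

lemma right_inv' (E : OmegaExt g) : fwd (bwd E) = E := by
  refine OmegaExt.ext' (OmegaLie.ext' ?_ ?_)
  · refine LinearMap.ext fun u => LinearMap.ext fun v => ?_
    show fwdBr (bwd E) u v = E.alg.bracket u v
    rw [fwdBr_apply]
    have hu := decomp u; have hv := decomp v
    conv_rhs => rw [hu, hv]
    simp only [map_add, map_smul, LinearMap.add_apply, LinearMap.smul_apply]
    rw [E.bracket_eq, brx E v.1, br_g_x E u.1, br_x_x E]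
    show (⁅u.1, v.1⁆ + u.2 • (bwd E).D v.1 - v.2 • (bwd E).D u.1, (0:ℂ)) = _
    show (⁅u.1, v.1⁆ + u.2 • ((E.alg.bracket ((0:g),(1:ℂ))) (v.1,0)).1
      - v.2 • ((E.alg.bracket ((0:g),(1:ℂ))) (u.1,0)).1, (0:ℂ)) = _
    refine Prod.ext ?_ ?_ <;>
      simp [Prod.smul_def, smul_smul] <;> abel
  · refine LinearMap.ext fun u => LinearMap.ext fun v => ?_
    show fwdOm (bwd E) u v = E.alg.omega u v
    rw [fwdOm_apply]
    have hu := decomp u; have hv := decomp v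
    conv_rhs => rw [hu, hv]
    simp only [map_add, map_smul, LinearMap.add_apply, LinearMap.smul_apply]
    rw [E.omega_g, om_x_x E, E.omega_skew (u.1,0) ((0:g),(1:ℂ))]
    show u.2 * E.alg.omega ((0:g),(1:ℂ)) (v.1,0) - v.2 * E.alg.omega ((0:g),(1:ℂ)) (u.1,0) = _
    simp only [smul_eq_mul, mul_zero, mul_neg]
    ring


/-- for a complex Lie algebra `𝔤` there is a one-to-one correspondence
between tailed derivations of `𝔤` and one-dimensional ω-extensions of `𝔤`, under which
the tailed derivation `(D, d)` corresponds to the extension with `[x, a] = D a` and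
`ω(x, a) = d a` for `a ∈ 𝔤` (where `x = (0,1)`). -/
theorem tailedDer_equiv_omegaExt (g : Type) [LieRing g] [LieAlgebra ℂ g] :
    ∃ φ : TailedDer g ≃ OmegaExt g, ∀ T : TailedDer g, ∀ a : g,
      (φ T).alg.bracket ((0 : g), (1 : ℂ)) (a, 0) = (T.D a, 0) ∧
      (φ T).alg.omega ((0 : g), (1 : ℂ)) (a, 0) = T.d a := by
  refine ⟨⟨fwd, bwd, left_inv', right_inv'⟩, ?_⟩
  intro T a
  constructor
  · show fwdBr T ((0:g),(1:ℂ)) (a,0) = (T.D a, 0)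
    rw [fwdBr_apply]
    refine Prod.ext ?_ rfl
    simp
  · show fwdOm T ((0:g),(1:ℂ)) (a,0) = T.d a
    rw [fwdOm_apply]
    simp
end

section
/- For a tailed derivation D of a Lie algebra 𝔤 satisfying [𝔤,𝔤] = 𝔤 (perfect Lie algebra), the tail d is uniquely determined by D. -/
/-- A tailed derivation of a Lie algebra: `D` with tail `d` satisfying
`D([y,z]) = [D y, z] + [y, D z] + d z • y − d y • z`. -/
def IsTailedDerOf {g : Type} [LieRing g] [LieAlgebra ℂ g]
    (D : g →ₗ[ℂ] g) (d : g →ₗ[ℂ] ℂ) : Prop :=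
  ∀ y z : g, D ⁅y, z⁆ = ⁅D y, z⁆ + ⁅y, D z⁆ + d z • y - d y • z

/-- for a tailed derivation `D` of a perfect complex Lie algebra `𝔤`
(i.e. `[𝔤,𝔤] = 𝔤`), the tail `d` is uniquely determined by `D`. -/
theorem tail_unique_of_perfect {g : Type} [LieRing g] [LieAlgebra ℂ g]
    (hperf : ∀ x : g, x ∈ Submodule.span ℂ {w : g | ∃ a b : g, w = ⁅a, b⁆})
    (D : g →ₗ[ℂ] g) (d d' : g →ₗ[ℂ] ℂ)
    (h : IsTailedDerOf D d) (h' : IsTailedDerOf D d') : d = d' := by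
  set e : g →ₗ[ℂ] ℂ := d - d' with he
  have key : ∀ y z : g, e z • y = e y • z := by
    intro y z
    have h1 := h y z
    have h2 := h' y z
    have h3 : d z • y - d y • z = d' z • y - d' y • z := by
      have := h1.symm.trans h2
      linear_combination (norm := module) this
    simp only [he, LinearMap.sub_apply, sub_smul]
    linear_combination (norm := module) h3
  by_contra hne
  have : ∃ y : g, e y ≠ 0 := by
    by_contra hall
    push_neg at hall
    apply hne
    ext x
    have := hall x
    simp only [he, LinearMap.sub_apply, sub_eq_zero] at this
    exact this
  obtain ⟨y, hy⟩ := this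
  -- every element is a multiple of y
  have hmul : ∀ z : g, z = ((e y)⁻¹ * e z) • y := by
    intro z
    have := key y z
    rw [mul_smul, this, smul_smul, inv_mul_cancel₀ hy, one_smul]
  -- all brackets vanish
  have hbr : ∀ a b : g, ⁅a, b⁆ = (0 : g) := by
    intro a b
    calc ⁅a, b⁆ = ⁅((e y)⁻¹ * e a) • y, ((e y)⁻¹ * e b) • y⁆ := by
            rw [← hmul a, ← hmul b]
      _ = (((e y)⁻¹ * e a) * ((e y)⁻¹ * e b)) • ⁅y, y⁆ := by
            rw [smul_lie, lie_smul, smul_smul]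
      _ = 0 := by rw [lie_self, smul_zero]
  have hset : {w : g | ∃ a b : g, w = ⁅a, b⁆} ⊆ {0} := by
    rintro w ⟨a, b, rfl⟩
    simp [hbr a b]
  have hy0 : y = 0 := by
    have := hperf y
    have hle := Submodule.span_mono (R := ℂ) hset
    rw [Submodule.span_singleton_eq_bot.mpr rfl] at hle
    simpa using hle this
  exact hy (by simp [hy0])
end

section
/- Every tailed derivation of a finite-dimensional complex semisimple Lie algebra is a derivation; i.e., TDer(𝔤) = Der(𝔤) for 𝔤 semisimple over ℂ. -/
/-!
Applying `D` to the Jacobi identity `⁅⁅y, z⁆, w⁆ = ⁅y, ⁅z, w⁆⁆ - ⁅z, ⁅y, w⁆⁆`, all derivation terms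
cancel by the Jacobi identity again and only the tails survive: `d ⁅y, z⁆ • id` equals
`ad (d z • y - d y • z)` plus three rank-one maps. Taking traces, `ad` is traceless on a perfect Lie
algebra and the rank-one maps contribute `d ⁅y, z⁆` in total, so `(dim 𝔤 - 1) • d ⁅y, z⁆ = 0`.
A semisimple Lie algebra is perfect and not one-dimensional, hence `d` vanishes on all brackets,
that is, on `𝔤 = ⁅𝔤, 𝔤⁆`.
-/

open LinearMap Module

namespace LieAlgebra

section CommRing

variable {R L : Type*} [CommRing R] [LieRing L] [LieAlgebra R L]

lemma derivedSeries_one_eq_top_of_isSemisimple [IsSemisimple R L] :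
    derivedSeries R L 1 = ⊤ := by
  set I := derivedSeries R L 1
  have hI : IsLieAbelian (Iᶜ : LieIdeal R L) := by
    rw [LieSubmodule.lie_abelian_iff_lie_self_eq_bot, ← le_bot_iff, ← inf_compl_eq_bot (a := I)]
    exact le_inf (LieSubmodule.mono_lie le_top le_top) (LieSubmodule.lie_le_left _ _)
  exact compl_eq_bot.mp ((hasTrivialRadical_iff_no_abelian_ideals R L).mp inferInstance _ hI)

lemma eq_zero_of_map_lie_eq_zero {M : Type*} [AddCommGroup M] [Module R M]
    (hL : derivedSeries R L 1 = ⊤) {f : L →ₗ[R] M} (hf : ∀ x y : L, f ⁅x, y⁆ = 0) : f = 0 := by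
  have hspan : Submodule.span R {⁅x, y⁆ | (x : L) (y : L)} ≤ LinearMap.ker f :=
    Submodule.span_le.mpr (by rintro _ ⟨x, y, rfl⟩; exact hf x y)
  ext x
  have hx : x ∈ Submodule.span R {⁅x, y⁆ | (x : L) (y : L)} := by
    rw [← coe_derivedSeries_one_eq, hL]
    trivial
  exact hspan hx

lemma trace_ad_eq_zero [Module.Free R L] [Module.Finite R L] (hL : derivedSeries R L 1 = ⊤)
    (x : L) : trace R L (ad R L x) = 0 :=
  LinearMap.congr_fun (eq_zero_of_map_lie_eq_zero hL
    (f := trace R L ∘ₗ (ad R L : L →ₗ[R] Module.End R L)) fun x y => by simp) x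

end CommRing

section Field

variable {K L : Type*} [Field K] [LieRing L] [LieAlgebra K L]

lemma isLieAbelian_of_finrank_eq_one (h : finrank K L = 1) : IsLieAbelian L := by
  obtain ⟨v, -, hv⟩ := finrank_eq_one_iff'.mp h
  refine ⟨fun x y => ?_⟩
  obtain ⟨a, rfl⟩ := hv x
  obtain ⟨b, rfl⟩ := hv y
  simp

lemma finrank_ne_one_of_hasTrivialRadical [HasTrivialRadical K L] : finrank K L ≠ 1 := by
  intro h
  have := isLieAbelian_of_finrank_eq_one h
  have := subsingleton_of_hasTrivialRadical_lie_abelian (R := K) (L := L)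
  simp [finrank_zero_of_subsingleton] at h

end Field

end LieAlgebra

section TailedDerivation

open LieAlgebra

variable {R L : Type*} [CommRing R] [LieRing L] [LieAlgebra R L]

def IsTailedDerivation (D : L →ₗ[R] L) (d : L →ₗ[R] R) : Prop :=
  ∀ y z : L, D ⁅y, z⁆ = ⁅D y, z⁆ + ⁅y, D z⁆ + d z • y - d y • z

namespace IsTailedDerivation

variable {D : L →ₗ[R] L} {d : L →ₗ[R] R}

lemma tail_lie_smul_eq (hD : IsTailedDerivation D d) (y z w : L) :
    d ⁅y, z⁆ • w =
      d z • ⁅y, w⁆ - d y • ⁅z, w⁆ - d w • ⁅y, z⁆ - d ⁅z, w⁆ • y + d ⁅y, w⁆ • z := by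
  have jacobi : D ⁅⁅y, z⁆, w⁆ = D ⁅y, ⁅z, w⁆⁆ - D ⁅z, ⁅y, w⁆⁆ := by
    rw [← map_sub, ← lie_lie]
  rw [hD ⁅y, z⁆ w, hD y ⁅z, w⁆, hD z ⁅y, w⁆, hD y z, hD z w, hD y w] at jacobi
  simp only [add_lie, sub_lie, smul_lie, lie_add, lie_sub, lie_smul, lie_lie] at jacobi
  rw [← lie_skew z y] at jacobi
  linear_combination (norm := module) -jacobi

lemma tail_lie_smul_id (hD : IsTailedDerivation D d) (y z : L) :
    d ⁅y, z⁆ • LinearMap.id = (ad R L (d z • y - d y • z) : Module.End R L) - d.smulRight ⁅y, z⁆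
      - (d ∘ₗ (ad R L z : Module.End R L)).smulRight y
      + (d ∘ₗ (ad R L y : Module.End R L)).smulRight z := by
  ext w
  simp only [LinearMap.smul_apply, LinearMap.id_apply, LinearMap.add_apply, LinearMap.sub_apply,
    LinearMap.smulRight_apply, LinearMap.comp_apply, ad_apply, sub_lie, smul_lie]
  linear_combination (norm := module) hD.tail_lie_smul_eq y z w

lemma finrank_sub_one_mul_tail_lie [Module.Free R L] [Module.Finite R L]
    (hD : IsTailedDerivation D d) (hL : derivedSeries R L 1 = ⊤) (y z : L) :
    ((finrank R L : R) - 1) * d ⁅y, z⁆ = 0 := by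
  have htrace := congrArg (trace R L) (hD.tail_lie_smul_id y z)
  simp only [map_smul, map_add, map_sub, trace_id, trace_smulRight, trace_ad_eq_zero hL,
    smul_eq_mul, LinearMap.comp_apply, ad_apply, ← lie_skew z y, map_neg] at htrace
  linear_combination htrace

lemma tail_eq_zero {K : Type*} [Field K] [CharZero K] [LieAlgebra K L] [FiniteDimensional K L]
    [IsSemisimple K L] {D : L →ₗ[K] L} {d : L →ₗ[K] K} (hD : IsTailedDerivation D d) : d = 0 := by
  have hL := derivedSeries_one_eq_top_of_isSemisimple (R := K) (L := L)
  have hn : (finrank K L : K) - 1 ≠ 0 :=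
    sub_ne_zero.mpr (by exact_mod_cast finrank_ne_one_of_hasTrivialRadical)
  exact eq_zero_of_map_lie_eq_zero hL fun y z =>
    (mul_eq_zero.mp (hD.finrank_sub_one_mul_tail_lie hL y z)).resolve_left hn

end IsTailedDerivation

end TailedDerivation

/-- every tailed derivation of a finite-dimensional complex semisimple Lie
algebra is a derivation: the tail is zero and `D` satisfies the Leibniz rule. -/
theorem tailedDer_eq_der_of_semisimple
    {g : Type} [LieRing g] [LieAlgebra ℂ g] [Module.Finite ℂ g]
    [LieAlgebra.IsSemisimple ℂ g]
    (D : g →ₗ[ℂ] g) (d : g →ₗ[ℂ] ℂ)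
    (h : ∀ y z : g, D ⁅y, z⁆ = ⁅D y, z⁆ + ⁅y, D z⁆ + d z • y - d y • z) :
    d = 0 ∧ ∀ y z : g, D ⁅y, z⁆ = ⁅D y, z⁆ + ⁅y, D z⁆ := by
  have hd : d = 0 := IsTailedDerivation.tail_eq_zero h
  refine ⟨hd, fun y z => ?_⟩
  simpa [hd] using h y z
end

section
/- For the two-dimensional nonabelian complex Lie algebra 𝔤 (with basis {y,z}, [y,z] = z), every linear endomorphism of 𝔤 is a tailed derivation; explicitly, the endomorphism with matrix (a c; b e) in the basis {y,z} is a tailed derivation with tail d determined by d_y = a and d_z = c. In particular TDer(𝔤) = 𝔤𝔩_2(ℂ) strictly contains Der(𝔤), which is two-dimensional. -/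
/-!
Every endomorphism `D` is a tailed derivation with tail `d u = (D u).1`, the `y`-coordinate of
`D u`: this is a coordinate identity. Conversely, the derivation rule on `[y, z] = z` forces
`d = 0`, so the derivations form the kernel of the surjection `D ↦ d` from the 4-dimensional
`𝔤𝔩₂(ℂ)` onto the 2-dimensional dual of `𝔤`, of dimension `4 - 2 = 2`.
-/

/-- The two-dimensional nonabelian complex Lie algebra on `ℂ × ℂ`, with basis
`y = (1,0)`, `z = (0,1)` and bracket `[y,z] = z`. -/
noncomputable def gb (u v : ℂ × ℂ) : ℂ × ℂ := (0, u.1 * v.2 - v.1 * u.2)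

/-- The space of derivations of the two-dimensional nonabelian Lie algebra. -/
noncomputable def derSub : Submodule ℂ ((ℂ × ℂ) →ₗ[ℂ] (ℂ × ℂ)) where
  carrier := {D | ∀ u v : ℂ × ℂ, D (gb u v) = gb (D u) v + gb u (D v)}
  add_mem' := by
    intro D T hD hT u v
    simp only [LinearMap.add_apply, hD u v, hT u v]
    ext <;> simp [gb] <;> ring
  zero_mem' := by
    intro u v
    ext <;> simp [gb]
  smul_mem' := by
    intro a D hD u v
    simp only [LinearMap.smul_apply, hD u v]
    ext <;> simp [gb] <;> ring

theorem LinearMap.apply_eq_fst_smul_add_snd_smul {R M : Type*} [CommSemiring R]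
    [AddCommMonoid M] [Module R M] (f : R × R →ₗ[R] M) (w : R × R) :
    f w = w.1 • f (1, 0) + w.2 • f (0, 1) := by
  rw [← map_smul, ← map_smul, ← map_add]
  congr 1
  ext <;> simp

noncomputable def tail : ((ℂ × ℂ) →ₗ[ℂ] (ℂ × ℂ)) →ₗ[ℂ] ((ℂ × ℂ) →ₗ[ℂ] ℂ) :=
  LinearMap.compRight ℂ (LinearMap.fst ℂ ℂ ℂ)

theorem tail_apply (D : (ℂ × ℂ) →ₗ[ℂ] (ℂ × ℂ)) (u : ℂ × ℂ) : tail D u = (D u).1 := rfl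

theorem map_gb (D : (ℂ × ℂ) →ₗ[ℂ] (ℂ × ℂ)) (u v : ℂ × ℂ) :
    D (gb u v) = gb (D u) v + gb u (D v) + tail D v • u - tail D u • v := by
  simp only [tail_apply, D.apply_eq_fst_smul_add_snd_smul (gb u v),
    D.apply_eq_fst_smul_add_snd_smul u, D.apply_eq_fst_smul_add_snd_smul v]
  ext <;> simp [gb] <;> ring

theorem mem_derSub_iff (D : (ℂ × ℂ) →ₗ[ℂ] (ℂ × ℂ)) : D ∈ derSub ↔ tail D = 0 := by
  have hder : D ∈ derSub ↔ ∀ u v : ℂ × ℂ, tail D v • u = tail D u • v := by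
    refine forall₂_congr fun u v ↦ ?_
    rw [map_gb, add_sub_assoc, add_eq_left, sub_eq_zero]
  rw [hder]
  refine ⟨fun h ↦ ?_, fun h ↦ by simp [h]⟩
  have hyz := h (1, 0) (0, 1)
  simp only [Prod.smul_mk, smul_eq_mul, mul_one, mul_zero, Prod.mk.injEq] at hyz
  ext
  · simpa using hyz.2.symm
  · simpa using hyz.1

theorem tail_surjective : Function.Surjective tail := fun d ↦
  ⟨(LinearMap.inl ℂ ℂ ℂ).comp d, by ext <;> rfl⟩

theorem finrank_derSub : Module.finrank ℂ derSub = 2 := by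
  have hker : derSub = LinearMap.ker tail := Submodule.ext mem_derSub_iff
  have := LinearMap.finrank_range_add_finrank_ker tail
  rw [LinearMap.range_eq_top.mpr tail_surjective, ← hker, finrank_top] at this
  simp only [Module.finrank_linearMap, Module.finrank_prod, Module.finrank_self] at this
  omega

/-- every linear endomorphism of the two-dimensional nonabelian Lie
algebra `𝔤` (basis `{y,z}`, `[y,z] = z`) is a tailed derivation, with tail `d`
determined by `d_y = a`, `d_z = c` where `D y = a y + b z`, `D z = c y + e z`;
so `TDer(𝔤) = 𝔤𝔩₂(ℂ)`, whereas `Der(𝔤)` is two-dimensional. -/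
theorem tder_two_dim_nonabelian :
    (∀ D : (ℂ × ℂ) →ₗ[ℂ] (ℂ × ℂ), ∃ d : (ℂ × ℂ) →ₗ[ℂ] ℂ,
      (∀ u v : ℂ × ℂ, D (gb u v) = gb (D u) v + gb u (D v) + d v • u - d u • v) ∧
      d (1, 0) = (D (1, 0)).1 ∧ d (0, 1) = (D (0, 1)).1) ∧
    Module.finrank ℂ derSub = 2 := ⟨fun D ↦ ⟨tail D, map_gb D, rfl, rfl⟩, finrank_derSub⟩
end

section
/- The three-dimensional complex vector space with basis {x,y,z}, bracket [y,z]=z, [x,z]=y−z, [x,y]=x+αz, and skew form ω with ω(y,z)=ω(x,z)=0, ω(x,y)=−1, is an ω-Lie algebra for every α ∈ ℂ, and it is simple (has no nonzero proper ideals). -/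
/-- The bracket of `A_α` on `ℂ³` (coordinates with respect to the basis `{x, y, z}`):
`[y,z] = z`, `[x,z] = y − z`, `[x,y] = x + αz`, extended bilinearly. -/
noncomputable def Abracket (α : ℂ) (u v : ℂ × ℂ × ℂ) : ℂ × ℂ × ℂ :=
  (u.1 * v.2.1 - v.1 * u.2.1,
   u.1 * v.2.2 - v.1 * u.2.2,
   α * (u.1 * v.2.1 - v.1 * u.2.1) - (u.1 * v.2.2 - v.1 * u.2.2)
     + (u.2.1 * v.2.2 - v.2.1 * u.2.2))

/-- The form ω of `A_α`: `ω(y,z) = ω(x,z) = 0`, `ω(x,y) = −1`, extended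
skew-symmetrically and bilinearly. -/
noncomputable def Aomega (u v : ℂ × ℂ × ℂ) : ℂ :=
  -(u.1 * v.2.1 - v.1 * u.2.1)

/-!
Both identities are polynomial identities in the coordinates. As for simplicity, `ad z` is
nilpotent: `[[a, z], z] = a₁ z`, and `[a, z] = a₂ z` when `a₁ = 0`; so every nonzero ideal
contains `z`. Then `[z, x] = z − y` and `[y, x] = −(x + αz)` put `y` and `x` in it too.
-/

local notation "𝐱" => ((1 : ℂ), (0 : ℂ), (0 : ℂ))
local notation "𝐲" => ((0 : ℂ), (1 : ℂ), (0 : ℂ))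
local notation "𝐳" => ((0 : ℂ), (0 : ℂ), (1 : ℂ))

section

variable (α : ℂ)

theorem Abracket_swap (u v : ℂ × ℂ × ℂ) : Abracket α u v = -Abracket α v u := by
  refine Prod.ext ?_ (Prod.ext ?_ ?_) <;> simp only [Abracket, Prod.neg_mk] <;> ring

theorem Abracket_omegaJacobi (u v w : ℂ × ℂ × ℂ) :
    Abracket α (Abracket α u v) w + Abracket α (Abracket α v w) u
        + Abracket α (Abracket α w u) v
      = Aomega u v • w + Aomega v w • u + Aomega w u • v := by
  refine Prod.ext ?_ (Prod.ext ?_ ?_) <;>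
    simp only [Abracket, Aomega, Prod.fst_add, Prod.snd_add, Prod.smul_fst, Prod.smul_snd,
      smul_eq_mul] <;> ring

theorem Abracket_z_x : Abracket α 𝐳 𝐱 = 𝐳 - 𝐲 := by
  simp [Abracket]

theorem Abracket_y_x : Abracket α 𝐲 𝐱 = -(𝐱 + α • 𝐳) := by
  simp [Abracket]

theorem Abracket_Abracket_z_z (a : ℂ × ℂ × ℂ) :
    Abracket α (Abracket α a 𝐳) 𝐳 = a.1 • 𝐳 := by
  simp [Abracket]

theorem Abracket_z_of_fst_eq_zero {a : ℂ × ℂ × ℂ} (h : a.1 = 0) :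
    Abracket α a 𝐳 = a.2.1 • 𝐳 := by
  simp [Abracket, h]

variable {α} {I : Submodule ℂ (ℂ × ℂ × ℂ)}

theorem z_mem_of_ne_zero (hI : ∀ a ∈ I, ∀ b : ℂ × ℂ × ℂ, Abracket α a b ∈ I)
    {a : ℂ × ℂ × ℂ} (ha : a ∈ I) (hne : a ≠ 0) : 𝐳 ∈ I := by
  by_cases h₁ : a.1 = 0
  · by_cases h₂ : a.2.1 = 0
    · have h₃ : a.2.2 ≠ 0 := fun h₃ => hne (Prod.ext h₁ (Prod.ext h₂ h₃))
      have ha' : a = a.2.2 • 𝐳 := Prod.ext (by simp [h₁]) (Prod.ext (by simp [h₂]) (by simp))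
      exact (I.smul_mem_iff h₃).mp (ha' ▸ ha)
    · refine (I.smul_mem_iff h₂).mp ?_
      rw [← Abracket_z_of_fst_eq_zero α h₁]
      exact hI a ha 𝐳
  · refine (I.smul_mem_iff h₁).mp ?_
    rw [← Abracket_Abracket_z_z α]
    exact hI _ (hI a ha 𝐳) 𝐳

theorem eq_top_of_z_mem (hI : ∀ a ∈ I, ∀ b : ℂ × ℂ × ℂ, Abracket α a b ∈ I)
    (hz : 𝐳 ∈ I) : I = ⊤ := by
  have hy : 𝐲 ∈ I := by
    have h := I.sub_mem hz (hI _ hz 𝐱)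
    rwa [Abracket_z_x, sub_sub_cancel] at h
  have hx : 𝐱 ∈ I := by
    have h := I.sub_mem (I.neg_mem (hI _ hy 𝐱)) (I.smul_mem α hz)
    rwa [Abracket_y_x, neg_neg, add_sub_cancel_right] at h
  rw [Submodule.eq_top_iff']
  intro v
  have hv : v = v.1 • 𝐱 + v.2.1 • 𝐲 + v.2.2 • 𝐳 := by
    refine Prod.ext ?_ (Prod.ext ?_ ?_) <;> simp
  rw [hv]
  exact I.add_mem (I.add_mem (I.smul_mem _ hx) (I.smul_mem _ hy)) (I.smul_mem _ hz)

end

/-- for every `α ∈ ℂ`, `A_α` (basis `{x,y,z}`, brackets `[y,z]=z`,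
`[x,z]=y−z`, `[x,y]=x+αz`, form `ω(y,z)=ω(x,z)=0`, `ω(x,y)=−1`) is an ω-Lie algebra
(skew-symmetric bracket and ω-Jacobi identity), and it is simple: it has no nonzero
proper ideal. -/
theorem Aalpha_omegaLie_simple (α : ℂ) :
    (∀ u v : ℂ × ℂ × ℂ, Abracket α u v = - Abracket α v u) ∧
    (∀ u v w : ℂ × ℂ × ℂ,
      Abracket α (Abracket α u v) w + Abracket α (Abracket α v w) u
          + Abracket α (Abracket α w u) v
        = Aomega u v • w + Aomega v w • u + Aomega w u • v) ∧
    (∀ I : Submodule ℂ (ℂ × ℂ × ℂ),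
      (∀ a ∈ I, ∀ b : ℂ × ℂ × ℂ, Abracket α a b ∈ I) → I = ⊥ ∨ I = ⊤) := by
  refine ⟨Abracket_swap α, Abracket_omegaJacobi α, fun I hI => ?_⟩
  rcases eq_or_ne I ⊥ with hbot | hbot
  · exact Or.inl hbot
  obtain ⟨a, ha, hne⟩ := Submodule.exists_mem_ne_zero_of_ne_bot hbot
  exact Or.inr (eq_top_of_z_mem hI (z_mem_of_ne_zero hI ha hne))
end

section
/- Let L be a finite-dimensional complex ω-Lie algebra with dim(L) > 2 having a soluble ideal 𝔤 of dimension dim(L)−1. Then L is multiplicative: there exists a linear form λ: L → ℂ with ω(x,y) = λ([x,y]) for all x,y ∈ L. -/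
namespace OmegaAux
variable {L : Type} [AddCommGroup L] [Module ℂ L]

theorem trace_smulRight {M : Type} [AddCommGroup M] [Module ℂ M] [FiniteDimensional ℂ M]
    (f : M →ₗ[ℂ] ℂ) (m : M) :
    LinearMap.trace ℂ M (f.smulRight m) = f m := by
  have h1 : f.smulRight m = (LinearMap.toSpanSingleton ℂ M m).comp f := by
    ext b; simp [LinearMap.toSpanSingleton_apply]
  rw [h1, LinearMap.trace_comp_comm']
  have h2 : f.comp (LinearMap.toSpanSingleton ℂ M m) = (f m) • LinearMap.id := by
    ext; simp [LinearMap.toSpanSingleton_apply]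
  rw [h2, map_smul, LinearMap.trace_id, Module.finrank_self]
  simp

theorem bracket_mem_right (A : OmegaLie L) {g : Submodule ℂ L} (h : A.IsIdeal g)
    (x : L) {c : L} (hc : c ∈ g) : A.bracket x c ∈ g := by
  rw [A.skew x c]; exact g.neg_mem (h c hc x)

def adg (A : OmegaLie L) (g : Submodule ℂ L) (h : A.IsIdeal g) :
    L →ₗ[ℂ] Module.End ℂ g where
  toFun x := (A.bracket x).restrict (fun c hc => bracket_mem_right A h x hc)
  map_add' x y := by ext b; simp [LinearMap.restrict_apply, map_add]
  map_smul' c x := by ext b; simp [LinearMap.restrict_apply, map_smul]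

/-- symmetrized omega identity -/
theorem sym_identity (A : OmegaLie L) (x y z : L) :
    (A.omega x y + A.omega y x) • z + (A.omega y z + A.omega z y) • x
      + (A.omega z x + A.omega x z) • y = 0 := by
  have j1 := A.jacobi x y z
  have j2 := A.jacobi y x z
  have e1 : A.omega x y • z + A.omega y z • x + A.omega z x • y
      + (A.omega y x • z + A.omega x z • y + A.omega z y • x) = 0 := by
    rw [← j1, ← j2, A.skew y x, A.skew x z, A.skew z y]
    simp only [map_neg, LinearMap.neg_apply]
    abel
  have e2 : (A.omega x y + A.omega y x) • z + (A.omega y z + A.omega z y) • x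
      + (A.omega z x + A.omega x z) • y
      = A.omega x y • z + A.omega y z • x + A.omega z x • y
      + (A.omega y x • z + A.omega x z • y + A.omega z y • x) := by module
  rw [e2, e1]

theorem bracket_self (A : OmegaLie L) (x : L) : A.bracket x x = 0 := by
  have h := A.skew x x
  have h2 : (2 : ℂ) • A.bracket x x = 0 := by
    rw [two_smul]; nth_rewrite 2 [h]; exact add_neg_cancel _
  rcases smul_eq_zero.mp h2 with h3 | h3
  · exact absurd h3 two_ne_zero
  · exact h3

end OmegaAux

/-- a finite-dimensional complex ω-Lie algebra `L` with `dim L > 2`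
having a soluble ideal `𝔤` of dimension `dim L − 1` is multiplicative: there is a
linear form `λ` with `ω(x,y) = λ([x,y])` for all `x, y ∈ L`. -/
theorem multiplicative_of_codim_one_soluble_ideal
    {L : Type} [AddCommGroup L] [Module ℂ L] [FiniteDimensional ℂ L]
    (A : OmegaLie L) (hdim : 2 < Module.finrank ℂ L)
    (g : Submodule ℂ L) (hideal : A.IsIdeal g)
    (hcodim : Module.finrank ℂ g = Module.finrank ℂ L - 1)
    (hsol : ∃ k, A.derivedFrom g k = ⊥) :
    ∃ lam : L →ₗ[ℂ] ℂ, ∀ x y : L, A.omega x y = lam (A.bracket x y) := by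
  classical
  have hg_ne_top : g ≠ ⊤ := by
    intro h
    have h2 : Module.finrank ℂ ↥g = Module.finrank ℂ L := by
      rw [h]; exact finrank_top ℂ L
    omega
  obtain ⟨e, he⟩ : ∃ e : L, e ∉ g := by
    by_contra h
    push_neg at h
    exact hg_ne_top (Submodule.eq_top_iff'.mpr h)
  have he0 : e ≠ 0 := fun h => he (h ▸ g.zero_mem)
  have hm2 : 2 ≤ Module.finrank ℂ ↥g := by omega
  have hsup : g ⊔ Submodule.span ℂ {e} = ⊤ := by
    have hlt : g < g ⊔ Submodule.span ℂ {e} := by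
      refine lt_of_le_of_ne le_sup_left (fun h => he ?_)
      have h2 : e ∈ g ⊔ Submodule.span ℂ {e} :=
        Submodule.mem_sup_right (Submodule.mem_span_singleton_self e)
      rwa [← h] at h2
    have h1 : Module.finrank ℂ ↥g < Module.finrank ℂ ↥(g ⊔ Submodule.span ℂ {e}) :=
      Submodule.finrank_lt_finrank_of_lt hlt
    have h2 : Module.finrank ℂ ↥(g ⊔ Submodule.span ℂ {e}) ≤ Module.finrank ℂ L :=
      Submodule.finrank_le _
    exact Submodule.eq_top_of_finrank_eq (by omega)
  have hdecomp : ∀ x : L, ∃ a ∈ g, ∃ α : ℂ, x = a + α • e := by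
    intro x
    have hx : x ∈ g ⊔ Submodule.span ℂ {e} := hsup ▸ Submodule.mem_top
    obtain ⟨a, ha, z, hz, hxz⟩ := Submodule.mem_sup.mp hx
    obtain ⟨α, rfl⟩ := Submodule.mem_span_singleton.mp hz
    exact ⟨a, ha, α, hxz.symm⟩
  have hωee : A.omega e e = 0 := by
    have h := OmegaAux.sym_identity A e e e
    have h2 : (6 * A.omega e e) • e = 0 := by
      rw [← h]; module
    rcases smul_eq_zero.mp h2 with h3 | h3
    · exact (mul_eq_zero.mp h3).resolve_left (by norm_num)
    · exact absurd h3 he0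
  have hskew_e : ∀ x : L, A.omega x e = - A.omega e x := by
    intro x
    have h := OmegaAux.sym_identity A e x e
    have h2 : (2 * (A.omega e x + A.omega x e)) • e
        + (2 * A.omega e e) • x = 0 := by rw [← h]; module
    rw [hωee] at h2
    simp only [mul_zero, zero_smul, add_zero] at h2
    rcases smul_eq_zero.mp h2 with h3 | h3
    · have h4 : A.omega e x + A.omega x e = 0 :=
        (mul_eq_zero.mp h3).resolve_left (by norm_num)
      linear_combination h4
    · exact absurd h3 he0
  have hωgg : ∀ a ∈ g, ∀ b ∈ g, A.omega a b = 0 := by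
    intro a ha b hb
    have j := A.jacobi a b e
    have hmem : A.omega a b • e ∈ g := by
      have h1 : A.omega a b • e
          = A.bracket (A.bracket a b) e + A.bracket (A.bracket b e) a
            + A.bracket (A.bracket e a) b
            - A.omega b e • a - A.omega e a • b := by
        rw [j]; module
      rw [h1]
      refine Submodule.sub_mem _ (Submodule.sub_mem _ ?_ (g.smul_mem _ ha))
        (g.smul_mem _ hb)
      refine Submodule.add_mem _ (Submodule.add_mem _ ?_ ?_) ?_
      · exact hideal _ (hideal a ha b) e
      · exact hideal _ (hideal b hb e) a
      · exact hideal _ (OmegaAux.bracket_mem_right A hideal e ha) b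
    by_contra hne
    apply he
    have h2 := g.smul_mem (A.omega a b)⁻¹ hmem
    rwa [smul_smul, inv_mul_cancel₀ hne, one_smul] at h2
  set E := OmegaAux.adg A g hideal with hE
  set tr := LinearMap.trace ℂ ↥g with htrdef
  have htr_bb : ∀ a ∈ g, ∀ b ∈ g, tr (E (A.bracket a b)) = 0 := by
    intro a ha b hb
    have hop : E (A.bracket a b) = E a * E b - E b * E a := by
      ext c
      have j := A.jacobi a b (c : L)
      rw [hωgg a ha b hb, hωgg b hb (c : L) c.2, hωgg (c : L) c.2 a ha] at j
      simp only [zero_smul, add_zero] at j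
      show (E (A.bracket a b) c : L) = ((E a * E b - E b * E a) c : L)
      have lhs : (E (A.bracket a b) c : L) = A.bracket (A.bracket a b) c := rfl
      have rhs : ((E a * E b - E b * E a) c : L)
          = A.bracket a (A.bracket b c) - A.bracket b (A.bracket a c) := rfl
      rw [lhs, rhs]
      have h1 : A.bracket (A.bracket b (c : L)) a = - A.bracket a (A.bracket b c) :=
        A.skew _ _
      have h2 : A.bracket (A.bracket (c : L) a) b = A.bracket b (A.bracket a c) := by
        rw [A.skew (c : L) a, map_neg, LinearMap.neg_apply,
          A.skew (A.bracket a (c : L)) b]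
        abel
      rw [h1, h2] at j
      linear_combination (norm := module) j
    rw [hop, map_sub, LinearMap.trace_mul_comm, sub_self]
  have htr_e : ∀ a ∈ g, tr (E (A.bracket e a))
      = ((Module.finrank ℂ ↥g : ℂ) - 1) * A.omega e a := by
    intro a ha
    set ν : ↥g →ₗ[ℂ] ℂ := (A.omega.flip e).comp g.subtype with hν
    have hop : E (A.bracket e a)
        = E e * E a - E a * E e + A.omega e a • (1 : Module.End ℂ ↥g)
          + ν.smulRight (⟨a, ha⟩ : ↥g) := by
      ext c
      have j := A.jacobi e a (c : L)
      rw [hωgg a ha (c : L) c.2] at j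
      simp only [zero_smul, add_zero] at j
      show (E (A.bracket e a) c : L)
          = ((E e * E a - E a * E e + A.omega e a • (1 : Module.End ℂ ↥g)
              + ν.smulRight (⟨a, ha⟩ : ↥g)) c : L)
      have rhs : ((E e * E a - E a * E e + A.omega e a • (1 : Module.End ℂ ↥g)
              + ν.smulRight (⟨a, ha⟩ : ↥g)) c : L)
          = A.bracket e (A.bracket a c) - A.bracket a (A.bracket e c)
            + A.omega e a • (c : L) + A.omega (c : L) e • a := rfl
      have lhs : (E (A.bracket e a) c : L) = A.bracket (A.bracket e a) c := rfl
      rw [lhs, rhs]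
      have h1 : A.bracket (A.bracket a (c : L)) e = - A.bracket e (A.bracket a c) :=
        A.skew _ _
      have h2 : A.bracket (A.bracket (c : L) e) a = A.bracket a (A.bracket e c) := by
        rw [A.skew (c : L) e, map_neg, LinearMap.neg_apply,
          A.skew (A.bracket e (c : L)) a]
        abel
      rw [h1, h2] at j
      linear_combination (norm := module) j
    rw [hop]
    simp only [map_add, map_sub, map_smul]
    rw [LinearMap.trace_mul_comm, sub_self, zero_add, LinearMap.trace_one,
      OmegaAux.trace_smulRight]
    have hν2 : ν (⟨a, ha⟩ : ↥g) = A.omega a e := rfl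
    rw [hν2, hskew_e a]
    simp only [smul_eq_mul]
    ring
  have hm1 : ((Module.finrank ℂ ↥g : ℂ) - 1) ≠ 0 := by
    refine sub_ne_zero.mpr (fun h => ?_)
    have h2 : ((Module.finrank ℂ ↥g : ℕ) : ℂ) = ((1 : ℕ) : ℂ) := by
      rw [h]; norm_num
    have h3 := Nat.cast_inj (R := ℂ) |>.mp h2
    omega
  refine ⟨((Module.finrank ℂ ↥g : ℂ) - 1)⁻¹ • (tr ∘ₗ E), ?_⟩
  intro x y
  obtain ⟨a, ha, α, rfl⟩ := hdecomp x
  obtain ⟨b, hb, β, rfl⟩ := hdecomp y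
  have hee : A.bracket e e = 0 := OmegaAux.bracket_self A e
  have hbr : A.bracket (a + α • e) (b + β • e)
      = A.bracket a b - β • A.bracket e a + α • A.bracket e b := by
    simp only [map_add, map_smul, LinearMap.add_apply, LinearMap.smul_apply]
    rw [hee, A.skew a e]
    module
  have hrhs : (((Module.finrank ℂ ↥g : ℂ) - 1)⁻¹ • (tr ∘ₗ E))
        (A.bracket (a + α • e) (b + β • e))
      = α * A.omega e b - β * A.omega e a := by
    rw [hbr]
    simp only [LinearMap.smul_apply, LinearMap.coe_comp, Function.comp_apply,
      map_add, map_sub, map_smul, smul_eq_mul]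
    rw [htr_bb a ha b hb, htr_e a ha, htr_e b hb]
    field_simp
    ring
  have hlhs : A.omega (a + α • e) (b + β • e)
      = α * A.omega e b - β * A.omega e a := by
    simp only [map_add, map_smul, LinearMap.add_apply, LinearMap.smul_apply,
      smul_eq_mul]
    rw [hωgg a ha b hb, hωee, hskew_e a]
    ring
  rw [hlhs, hrhs]
end
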